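/- Let ε > 0 be a real number, p ≥ 1 a natural number, and set k = ⌈(1 + ε)p⌉. Let V be a finite nonempty type with |V| ≤ n and n ≥ k + 1, and α a linearly ordered type. Let G : ℕ → SimpleGraph V be a sequence of simple graphs on V, each having at most p connected components, and let m : ℕ → V → α satisfy m(t+1) = step(G(t), m(t)) for all t. Then for every natural number t with t ≥ 1 + (1 + ε)n/ε, the image of m(t) contains at most k distinct values. (The min-propagation algorithm solves ⌈(1+ε)p⌉-agreement in O(n/ε) rounds on any p-partitioned dynamic network with at most n processes.) -/

import Mathlib

open Finset in
/-- The rank of a vertex `v` under value assignment `m`: the number of distinct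
values in the image of `m` that are strictly smaller than `m v`. -/
def rk {V α : Type*} [Fintype V] [LinearOrder α] (m : V → α) (v : V) : ℕ :=
  ((univ.image m).filter (· < m v)).card

open scoped Classical in
/-- One min-update step: each vertex takes the minimum of `m` over its closed
neighborhood `{v} ∪ {u : G.Adj u v}`. -/
noncomputable def step {V α : Type*} [Fintype V] [LinearOrder α]
    (G : SimpleGraph V) (m : V → α) (v : V) : α :=
  (insert v (Finset.univ.filter (fun u => G.Adj u v))).inf'
    (Finset.insert_nonempty _ _) m

/-- The potential function `Φ_k(m) = Σ_v (k - r_m(v))` (truncated subtraction). -/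
def Phi {V α : Type*} [Fintype V] [LinearOrder α] (k : ℕ) (m : V → α) : ℕ :=
  ∑ v, (k - rk m v)

/-!
Let `rk m v` be the rank of `m v` among the values of `m`. Ranks never increase under `step`,
and the number of vertices of rank `≤ j` strictly grows whenever some edge joins rank `≤ j` to
rank `> j`. While more than `k` values remain, every rank `0, …, k` is attained, and the
uncrossed levels `j < k` are fewer than the components; so the potential
`Φ_k ≤ k |V| ≤ k n` gains at least `k + 1 - p` per round. This gives `t (k + 1 - p) ≤ k n`,
impossible for `t ≥ 1 + (1 + ε) n / ε` since `k - p ≥ ε k / (1 + ε)`.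
-/

open Finset

section CrossesLevel

variable {V : Type*}

def CrossesLevel (G : SimpleGraph V) (r : V → ℕ) (j : ℕ) : Prop :=
  ∃ a b, G.Adj a b ∧ r a ≤ j ∧ j < r b

lemma crossesLevel_of_reachable {G : SimpleGraph V} {r : V → ℕ} {j : ℕ} {u v : V}
    (h : G.Reachable u v) (hu : r u ≤ j) (hv : j < r v) : CrossesLevel G r j := by
  obtain ⟨W⟩ := h
  obtain ⟨d, -, hd, hd'⟩ := W.exists_boundary_dart {x | r x ≤ j} hu (by simpa using hv)
  exact ⟨d.fst, d.snd, d.adj, hd, by simpa using hd'⟩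

open scoped Classical in
/-- If `r` takes every value `0, …, k`, then the vertices of rank `0` and of rank `j + 1` for each
uncrossed level `j < k` lie in pairwise distinct components. -/
lemma card_filter_not_crossesLevel_lt [Finite V] (G : SimpleGraph V) (r : V → ℕ) {k : ℕ}
    (hr : ∀ i ≤ k, ∃ v, r v = i) :
    #{j ∈ range k | ¬ CrossesLevel G r j} < Nat.card G.ConnectedComponent := by
  obtain ⟨v₀, -⟩ := hr 0 k.zero_le
  have : Nonempty V := ⟨v₀⟩
  choose! w hw using hr
  set B := {j ∈ range k | ¬ CrossesLevel G r j}
  set T := insert 0 (B.image (· + 1))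
  have hTk : ∀ i ∈ T, i ≤ k := by
    simp only [T, B, mem_insert, mem_image, mem_filter, mem_range]
    omega
  have hsep : ∀ i ∈ T, ∀ i' ∈ T, i < i' →
      G.connectedComponentMk (w i) ≠ G.connectedComponentMk (w i') := by
    intro i hi i' hi' hlt hcc
    obtain ⟨j, hj, rfl⟩ : ∃ j ∈ B, j + 1 = i' :=
      (mem_image.mp ((mem_insert.mp hi').resolve_left (by omega)))
    have hreach : G.Reachable (w i) (w (j + 1)) := SimpleGraph.ConnectedComponent.eq.mp hcc
    refine (mem_filter.mp hj).2 (crossesLevel_of_reachable hreach ?_ ?_)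
    · rw [hw i (hTk i hi)]; omega
    · rw [hw (j + 1) (hTk _ hi')]; omega
  have hinj : Set.InjOn (fun i => G.connectedComponentMk (w i)) T := by
    intro i hi i' hi' hcc
    rcases lt_trichotomy i i' with h | h | h
    · exact absurd hcc (hsep i hi i' hi' h)
    · exact h
    · exact absurd hcc.symm (hsep i' hi' i hi h)
  have := Fintype.ofFinite G.ConnectedComponent
  calc #B < #T := by
        rw [card_insert_of_notMem (by simp), card_image_of_injective _ (add_left_injective 1)]
        exact Nat.lt_succ_self _
    _ = #(T.image fun i => G.connectedComponentMk (w i)) := (card_image_of_injOn hinj).symm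
    _ ≤ Nat.card G.ConnectedComponent := by
        rw [Nat.card_eq_fintype_card]; exact card_le_univ _

end CrossesLevel

section Rank

variable {V α : Type*} [Fintype V] [LinearOrder α]

lemma exists_rk_eq (m : V → α) {j : ℕ} (hj : j < #(univ.image m)) : ∃ v, rk m v = j := by
  set e := (univ.image m).orderEmbOfFin rfl
  obtain ⟨v, -, hv⟩ := mem_image.mp ((univ.image m).orderEmbOfFin_mem rfl ⟨j, hj⟩)
  refine ⟨v, ?_⟩
  have : (univ.image m).filter (· < m v) = (Iio (⟨j, hj⟩ : Fin _)).map e.toEmbedding := by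
    ext x
    simp only [mem_filter, mem_map, mem_Iio, RelEmbedding.coe_toEmbedding]
    constructor
    · rintro ⟨hx, hlt⟩
      obtain ⟨i, rfl⟩ : x ∈ Set.range e := by rwa [range_orderEmbOfFin]
      exact ⟨i, e.lt_iff_lt.mp (hv ▸ hlt), rfl⟩
    · rintro ⟨i, hi, rfl⟩
      exact ⟨orderEmbOfFin_mem _ _ i, hv ▸ e.lt_iff_lt.mpr hi⟩
  rw [rk, this, card_map, Fin.card_Iio]

open scoped Classical in
lemma step_le (G : SimpleGraph V) (m : V → α) (v : V) : step G m v ≤ m v :=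
  inf'_le _ (mem_insert_self _ _)

open scoped Classical in
lemma step_le_of_adj (G : SimpleGraph V) (m : V → α) {u v : V} (h : G.Adj u v) :
    step G m v ≤ m u :=
  inf'_le _ (mem_insert_of_mem (by simp [h]))

open scoped Classical in
lemma image_step_subset (G : SimpleGraph V) (m : V → α) :
    univ.image (step G m) ⊆ univ.image m := by
  simp only [subset_iff, mem_image, mem_univ, true_and, forall_exists_index,
    forall_apply_eq_imp_iff]
  intro v
  obtain ⟨u, -, hu⟩ := exists_mem_eq_inf' (insert_nonempty v (univ.filter (G.Adj · v))) m
  exact ⟨u, hu.symm⟩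

lemma rk_le_rk {m m' : V → α} {u v : V} (hsub : univ.image m' ⊆ univ.image m)
    (hle : m' v ≤ m u) : rk m' v ≤ rk m u :=
  card_le_card fun _ hx => by
    rw [mem_filter] at hx ⊢
    exact ⟨hsub hx.1, hx.2.trans_le hle⟩

lemma rk_step_le (G : SimpleGraph V) (m : V → α) (v : V) : rk (step G m) v ≤ rk m v :=
  rk_le_rk (image_step_subset G m) (step_le G m v)

lemma rk_step_le_of_adj (G : SimpleGraph V) (m : V → α) {u v : V} (h : G.Adj u v) :
    rk (step G m) v ≤ rk m u :=
  rk_le_rk (image_step_subset G m) (step_le_of_adj G m h)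

end Rank

section Potential

variable {V α : Type*} [Fintype V] [LinearOrder α]

lemma Phi_eq_sum_card_rk_le (k : ℕ) (m : V → α) :
    Phi k m = ∑ j ∈ range k, #{v | rk m v ≤ j} := by
  have hv : ∀ v, k - rk m v = #{j ∈ range k | rk m v ≤ j} := fun v => by
    rw [show {j ∈ range k | rk m v ≤ j} = Ico (rk m v) k by ext; simp [and_comm],
      Nat.card_Ico]
  simp_rw [Phi, hv, card_filter]
  exact sum_comm

lemma Phi_le (k : ℕ) (m : V → α) : Phi k m ≤ k * Fintype.card V :=
  calc Phi k m ≤ ∑ _v : V, k := sum_le_sum fun _ _ => Nat.sub_le _ _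
    _ = k * Fintype.card V := by simp [mul_comm]

lemma card_rk_le_le_step (G : SimpleGraph V) (m : V → α) (j : ℕ) :
    #{v | rk m v ≤ j} ≤ #{v | rk (step G m) v ≤ j} :=
  card_le_card fun v hv => by
    simp only [mem_filter, mem_univ, true_and] at hv ⊢
    exact (rk_step_le G m v).trans hv

lemma card_rk_le_lt_step {G : SimpleGraph V} {m : V → α} {j : ℕ}
    (h : CrossesLevel G (rk m) j) : #{v | rk m v ≤ j} < #{v | rk (step G m) v ≤ j} := by
  obtain ⟨a, b, hab, ha, hb⟩ := h
  refine card_lt_card ((ssubset_iff_of_subset fun v hv => ?_).mpr ⟨b, ?_, ?_⟩)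
  · simp only [mem_filter, mem_univ, true_and] at hv ⊢
    exact (rk_step_le G m v).trans hv
  · simpa using (rk_step_le_of_adj G m hab).trans ha
  · simpa using hb

open scoped Classical in
lemma Phi_add_le_Phi_step (G : SimpleGraph V) {m : V → α} {k : ℕ}
    (hk : k + 1 ≤ #(univ.image m)) :
    Phi k m + (k + 1) ≤ Phi k (step G m) + Nat.card G.ConnectedComponent := by
  have hsplit : #{j ∈ range k | CrossesLevel G (rk m) j} +
      #{j ∈ range k | ¬ CrossesLevel G (rk m) j} = k := by
    rw [card_filter_add_card_filter_not, card_range]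
  have hfew := card_filter_not_crossesLevel_lt G (rk m) (k := k)
    fun i hi => exists_rk_eq m (by omega : i < #(univ.image m))
  have hgain : Phi k m + #{j ∈ range k | CrossesLevel G (rk m) j} ≤ Phi k (step G m) := by
    rw [Phi_eq_sum_card_rk_le, Phi_eq_sum_card_rk_le, card_filter, ← sum_add_distrib]
    refine sum_le_sum fun j _ => ?_
    split_ifs with h
    · exact card_rk_le_lt_step h
    · simpa using card_rk_le_le_step G m j
  omega

end Potential

section MinPropagation

variable {V α : Type*} [Fintype V] [LinearOrder α]
  {G : ℕ → SimpleGraph V} {m : ℕ → V → α}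

lemma image_subset_image_of_le (hm : ∀ t, m (t + 1) = step (G t) (m t)) {s t : ℕ}
    (hst : s ≤ t) : univ.image (m t) ⊆ univ.image (m s) :=
  antitone_nat_of_succ_le (f := fun t => univ.image (m t))
    (fun t => hm t ▸ image_step_subset (G t) (m t)) hst

lemma mul_succ_le_of_card_image_gt (hm : ∀ t, m (t + 1) = step (G t) (m t)) {p k t : ℕ}
    (hG : ∀ t, Nat.card (G t).ConnectedComponent ≤ p) (hk : k + 1 ≤ #(univ.image (m t))) :
    t * (k + 1) ≤ k * Fintype.card V + t * p := by
  have hgrowth : ∀ s ≤ t, s * (k + 1) ≤ Phi k (m s) + s * p := by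
    intro s
    induction s with
    | zero => simp
    | succ s ih =>
      intro hs
      have hstep := Phi_add_le_Phi_step (G s) (m := m s) (k := k)
        (hk.trans (card_le_card (image_subset_image_of_le hm (Nat.le_of_succ_le hs))))
      rw [← hm s] at hstep
      have := hG s
      nlinarith [ih (Nat.le_of_succ_le hs)]
  have := Phi_le k (m t)
  linarith [hgrowth t le_rfl]

end MinPropagation

theorem eps_agreement_rounds_general {V α : Type*} [Fintype V]
    [LinearOrder α] (ε : ℝ) (hε : 0 < ε) (p : ℕ) (k : ℕ)
    (hk : k = ⌈(1 + ε) * (p : ℝ)⌉₊) (n : ℕ)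
    (hcard : Fintype.card V ≤ n)
    (G : ℕ → SimpleGraph V)
    (hG : ∀ t, Nat.card (G t).ConnectedComponent ≤ p)
    (m : ℕ → V → α) (hm : ∀ t, m (t + 1) = step (G t) (m t)) :
    ∀ t : ℕ, 1 + (1 + ε) * n / ε ≤ (t : ℝ) →
      (Finset.univ.image (m t)).card ≤ k := by
  intro t ht
  by_contra! hmany
  have hbound : (t * (k + 1) : ℝ) ≤ k * n + t * p := by
    exact_mod_cast (mul_succ_le_of_card_image_gt hm hG hmany).trans
      (by gcongr : k * Fintype.card V + t * p ≤ k * n + t * p)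
  have hkp : (1 + ε) * p ≤ k := hk ▸ Nat.le_ceil _
  have ht' : ε + (1 + ε) * n ≤ ε * t :=
    calc ε + (1 + ε) * n = ε * (1 + (1 + ε) * n / ε) := by field_simp
      _ ≤ ε * t := by gcongr
  nlinarith [mul_nonneg (t.cast_nonneg : (0 : ℝ) ≤ t) (sub_nonneg.mpr hkp),
    mul_nonneg (k.cast_nonneg : (0 : ℝ) ≤ k) (sub_nonneg.mpr ht')]

/-- With `k = ⌈(1 + ε)p⌉`, the min-propagation algorithm achieves
`k`-agreement in `O(n/ε)` rounds: after any `t ≥ 1 + (1 + ε)n/ε` rounds at most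
`k` distinct values remain. -/
theorem eps_agreement_rounds {V α : Type*} [Fintype V] [Nonempty V]
    [LinearOrder α] (ε : ℝ) (hε : 0 < ε) (p : ℕ) (hp : 1 ≤ p) (k : ℕ)
    (hk : k = ⌈(1 + ε) * (p : ℝ)⌉₊) (n : ℕ) (hnk : k + 1 ≤ n)
    (hcard : Fintype.card V ≤ n)
    (G : ℕ → SimpleGraph V)
    (hG : ∀ t, Nat.card (G t).ConnectedComponent ≤ p)
    (m : ℕ → V → α) (hm : ∀ t, m (t + 1) = step (G t) (m t)) :
    ∀ t : ℕ, 1 + (1 + ε) * n / ε ≤ (t : ℝ) →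
      (Finset.univ.image (m t)).card ≤ k :=
  eps_agreement_rounds_general ε hε p k hk n hcard G hG m hm
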